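/- arXiv:1810.10120 — 3 statements merged into one kernel-verified Lean document; each statement's English description precedes it below -/
import Mathlib

section
/- Suppose a, λ, R, d > 0 satisfy λ − a < (λ + a)³ and d(λ − a) > (a + λ)³ + 2√d·(a + λ)². Let D = [d(λ−a)/(λ+a) − (λ+a)²]² − 4d(λ+a)², and suppose μ > 0 lies strictly between (R²/2d)[d(λ−a)/(λ+a) − (λ+a)² − √D] and (R²/2d)[d(λ−a)/(λ+a) − (λ+a)² + √D]. Then the quadratic β² + [μ(d+1) − R²((λ−a)/(λ+a) − (a+λ)²)]β + dμ² + R²((a+λ)² − d(λ−a)/(λ+a))μ + R⁴(a+λ)² has a positive real root. -/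
set_option maxHeartbeats 1000000


/-- In the instability window for μ, the characteristic quadratic has a positive real root. -/
theorem exists_positive_real_root (a lam R d μ D : ℝ)
    (ha : 0 < a) (hl : 0 < lam) (hR : 0 < R) (hd : 0 < d)
    (hcube : lam - a < (lam + a) ^ 3)
    (h2 : (a + lam) ^ 3 + 2 * Real.sqrt d * (a + lam) ^ 2 < d * (lam - a))
    (hD : D = (d * (lam - a) / (lam + a) - (lam + a) ^ 2) ^ 2 - 4 * d * (lam + a) ^ 2)
    (hμ0 : 0 < μ)
    (hμlo : R ^ 2 / (2 * d) * (d * (lam - a) / (lam + a) - (lam + a) ^ 2 - Real.sqrt D) < μ)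
    (hμhi : μ < R ^ 2 / (2 * d) * (d * (lam - a) / (lam + a) - (lam + a) ^ 2 + Real.sqrt D)) :
    ∃ β : ℝ, 0 < β ∧
      β ^ 2
        + (μ * (d + 1) - R ^ 2 * ((lam - a) / (lam + a) - (a + lam) ^ 2)) * β
        + (d * μ ^ 2 + R ^ 2 * ((a + lam) ^ 2 - d * (lam - a) / (lam + a)) * μ
            + R ^ 4 * (a + lam) ^ 2) = 0 := by
  set b : ℝ := μ * (d + 1) - R ^ 2 * ((lam - a) / (lam + a) - (a + lam) ^ 2) with hb
  set c : ℝ := d * μ ^ 2 + R ^ 2 * ((a + lam) ^ 2 - d * (lam - a) / (lam + a)) * μ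
      + R ^ 4 * (a + lam) ^ 2 with hc
  have hla : 0 < lam + a := by linarith
  have hsd : Real.sqrt d ^ 2 = d := Real.sq_sqrt hd.le
  have hsd0 : 0 ≤ Real.sqrt d := Real.sqrt_nonneg d
  -- S := d(λ−a)/(λ+a) − (λ+a)²
  set S : ℝ := d * (lam - a) / (lam + a) - (lam + a) ^ 2 with hS
  clear_value b c S
  have hS2 : 2 * Real.sqrt d * (lam + a) < S := by
    rw [hS, lt_sub_iff_add_lt, lt_div_iff₀ hla]
    nlinarith [h2]
  have hS2n : 0 ≤ 2 * Real.sqrt d * (lam + a) := by positivity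
  have hDpos : 0 < D := by
    rw [hD]
    nlinarith [hS2, hS2n, hsd]
  have hsD : Real.sqrt D ^ 2 = D := Real.sq_sqrt hDpos.le
  have hsD0 : 0 ≤ Real.sqrt D := Real.sqrt_nonneg D
  -- c < 0
  have hcneg : c < 0 := by
    have h2d : (0:ℝ) < 2 * d := by linarith
    have h1 : R ^ 2 * (S - Real.sqrt D) < 2 * d * μ := by
      have := hμlo
      rw [div_mul_eq_mul_div, div_lt_iff₀ h2d] at this
      linarith
    have h2' : 2 * d * μ < R ^ 2 * (S + Real.sqrt D) := by
      have := hμhi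
      rw [div_mul_eq_mul_div, lt_div_iff₀ h2d] at this
      linarith
    have hRD : (R ^ 2 * Real.sqrt D) ^ 2 = R ^ 4 * (S ^ 2 - 4 * d * (lam + a) ^ 2) := by
      rw [mul_pow, hsD, hD]; ring
    have key : (2 * d * μ - R ^ 2 * S) ^ 2 < R ^ 4 * (S ^ 2 - 4 * d * (lam + a) ^ 2) := by
      rw [← hRD]; nlinarith [h1, h2']
    have key2 : 4 * d * (d * μ ^ 2 - R ^ 2 * S * μ + R ^ 4 * (lam + a) ^ 2) < 0 := by
      nlinarith [key]
    have hcform : c = d * μ ^ 2 - R ^ 2 * S * μ + R ^ 4 * (lam + a) ^ 2 := by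
      rw [hc, hS]; ring
    rw [hcform]
    nlinarith [key2]
  have hdisc : b ^ 2 < b ^ 2 - 4 * c := by linarith
  set t : ℝ := Real.sqrt (b ^ 2 - 4 * c) with ht
  have ht2 : t ^ 2 = b ^ 2 - 4 * c := Real.sq_sqrt (by nlinarith)
  have ht0 : 0 ≤ t := Real.sqrt_nonneg _
  have htb : b < t := by nlinarith
  refine ⟨(t - b) / 2, by linarith, ?_⟩
  have : ((t - b) / 2) ^ 2 + b * ((t - b) / 2) + c = 0 := by
    field_simp
    nlinarith [ht2]
  linarith [this]
end

section
/- Suppose w satisfies x(xw')' = (n² − x²)w on an interval, w'(n) > 0, and w(x) < 0 for n < x < c (where c > n). Then w'(x) > 0 for all x in [n, c]. -/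
/-! The equation says `(x w')' = (n² - x²) w / x`, which is positive on `(n, c)`; hence `x w'(x)`
increases from `n w'(n) > 0` on `[n, c]`. -/

open Set

theorem monotoneOn_mul_deriv_of_nonneg {a b : ℝ} {f' f'' : ℝ → ℝ}
    (hf' : ∀ x ∈ Icc a b, HasDerivAt f' (f'' x) x)
    (hnonneg : ∀ x ∈ Ioo a b, 0 ≤ f' x + x * f'' x) :
    MonotoneOn (fun x => x * f' x) (Icc a b) := by
  have hderiv : ∀ x ∈ Icc a b, HasDerivAt (fun y => y * f' y) (f' x + x * f'' x) x := by
    intro x hx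
    simpa using (hasDerivAt_id x).fun_mul (hf' x hx)
  refine monotoneOn_of_hasDerivWithinAt_nonneg (f' := fun x => f' x + x * f'' x) (convex_Icc a b)
    (fun x hx => (hderiv x hx).continuousAt.continuousWithinAt) (fun x hx => ?_) ?_
  · rw [interior_Icc] at hx ⊢
    exact (hderiv x (Ioo_subset_Icc_self hx)).hasDerivWithinAt
  · simpa only [interior_Icc] using hnonneg

theorem deriv_pos_on_interval_general (n c : ℝ) (hn : 0 < n)
    (w w' w'' : ℝ → ℝ)
    (hw' : ∀ x ∈ Icc n c, HasDerivAt w' (w'' x) x)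
    (hode : ∀ x ∈ Icc n c, x * (w' x + x * w'' x) = (n ^ 2 - x ^ 2) * w x)
    (hw'n : 0 < w' n)
    (hwneg : ∀ x, n < x → x < c → w x < 0) :
    ∀ x ∈ Icc n c, 0 < w' x := by
  have hmono : MonotoneOn (fun x => x * w' x) (Icc n c) := by
    refine monotoneOn_mul_deriv_of_nonneg hw' fun y hy => ?_
    have hy0 : 0 < y := hn.trans hy.1
    have hrhs : 0 < (n ^ 2 - y ^ 2) * w y :=
      mul_pos_of_neg_of_neg (by nlinarith [hy.1]) (hwneg y hy.1 hy.2)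
    rw [← hode y (Ioo_subset_Icc_self hy)] at hrhs
    exact (pos_of_mul_pos_right hrhs hy0.le).le
  intro x hx
  have hgrowth : n * w' n ≤ x * w' x := hmono ⟨le_rfl, hx.1.trans hx.2⟩ hx hx.1
  exact pos_of_mul_pos_right ((mul_pos hn hw'n).trans_le hgrowth) (hn.le.trans hx.1)

/-- If x(xw')' = (n² − x²)w on [n, c], w'(n) > 0 and w < 0 on (n, c), then w' > 0 on [n, c]. -/
theorem deriv_pos_on_interval (n c : ℝ) (hn : 0 < n) (hc : n < c)
    (w w' w'' : ℝ → ℝ)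
    (hw : ∀ x ∈ Icc n c, HasDerivAt w (w' x) x)
    (hw' : ∀ x ∈ Icc n c, HasDerivAt w' (w'' x) x)
    (hode : ∀ x ∈ Icc n c, x * (w' x + x * w'' x) = (n ^ 2 - x ^ 2) * w x)
    (hw'n : 0 < w' n)
    (hwneg : ∀ x, n < x → x < c → w x < 0) :
    ∀ x ∈ Icc n c, 0 < w' x :=
  deriv_pos_on_interval_general n c hn w w' w'' hw' hode hw'n hwneg
end

section
/- For every n ≥ 1 and δ > 1, the smallest eigenvalue λ_{n,1} of the Neumann radial problem R'' + r⁻¹R' + (λ − n²/r²)R = 0, R'(1) = R'(δ) = 0 on [1, δ] satisfies λ_{n,1} > n²/δ². -/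
open Set

def radialNeumannEigenvalues (n : ℕ) (δ : ℝ) : Set ℝ :=
  {lam : ℝ | 0 ≤ lam ∧ ∃ R R' R'' : ℝ → ℝ,
    (∀ r ∈ Icc (1 : ℝ) δ, HasDerivAt R (R' r) r ∧ HasDerivAt R' (R'' r) r ∧
      R'' r + r⁻¹ * R' r + (lam - (n : ℝ) ^ 2 / r ^ 2) * R r = 0) ∧
    R' 1 = 0 ∧ R' δ = 0 ∧ ∃ r ∈ Icc (1 : ℝ) δ, R r ≠ 0}

/-- For n ≥ 1 and δ > 1, the smallest radial Neumann eigenvalue λ_{n,1} satisfies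
λ_{n,1} > n²/δ². -/
theorem first_radial_eigenvalue_lower_bound (n : ℕ) (hn : 1 ≤ n) (δ : ℝ) (hδ : 1 < δ)
    (lam₁ : ℝ) (hleast : IsLeast (radialNeumannEigenvalues n δ) lam₁) :
    (n : ℝ) ^ 2 / δ ^ 2 < lam₁ := by
  by_contra hle
  push_neg at hle
  obtain ⟨⟨hlam0, R, R', R'', hODE, hb1, hbδ, r₀, hr₀, hR₀⟩, _⟩ := hleast
  have hδ0 : (0:ℝ) < δ := lt_trans one_pos hδ
  have hn0 : (0:ℝ) < (n:ℝ)^2 := by positivity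
  -- coefficient nonneg on Icc
  have hq : ∀ r ∈ Icc (1:ℝ) δ, 0 ≤ (n:ℝ)^2 / r^2 - lam₁ := by
    intro r hr
    have hr1 : (1:ℝ) ≤ r := hr.1
    have : (n:ℝ)^2 / δ^2 ≤ (n:ℝ)^2 / r^2 := by
      apply div_le_div_of_nonneg_left (le_of_lt hn0) (by positivity)
      nlinarith [hr.2]
    linarith
  set F : ℝ → ℝ := fun r => r * R' r * R r with hFdef
  have hFd : ∀ r ∈ Icc (1:ℝ) δ,
      HasDerivAt F (r * ((n:ℝ)^2/r^2 - lam₁) * (R r)^2 + r * (R' r)^2) r := by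
    intro r hr
    obtain ⟨hR, hR', heq⟩ := hODE r hr
    have hr0 : r ≠ 0 := by intro h; rw [h] at hr; linarith [hr.1]
    have h1 : HasDerivAt (fun x => x * R' x * R x)
        ((1 * R' r + r * R'' r) * R r + (r * R' r) * R' r) r :=
      (((hasDerivAt_id r).mul hR').mul hR)
    convert h1 using 1
    have hRexp : R'' r = -(r⁻¹ * R' r) - (lam₁ - (n:ℝ)^2 / r^2) * R r := by linarith
    rw [hRexp]
    field_simp
    ring
  have hFcont : ContinuousOn F (Icc 1 δ) := fun r hr => ((hFd r hr).continuousAt).continuousWithinAt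
  have hint : interior (Icc (1:ℝ) δ) = Ioo 1 δ := interior_Icc
  have hFmono : MonotoneOn F (Icc 1 δ) := by
    apply monotoneOn_of_deriv_nonneg (convex_Icc 1 δ) hFcont
    · intro r hr
      rw [hint] at hr
      exact ((hFd r (Ioo_subset_Icc_self hr)).differentiableAt).differentiableWithinAt
    · intro r hr
      rw [hint] at hr
      rw [(hFd r (Ioo_subset_Icc_self hr)).deriv]
      have h1 := hq r (Ioo_subset_Icc_self hr)
      have hr0 : (0:ℝ) < r := lt_trans one_pos hr.1
      positivity
  have hF1 : F 1 = 0 := by simp [hFdef, hb1]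
  have hFδ : F δ = 0 := by simp [hFdef, hbδ]
  have hFzero : ∀ r ∈ Icc (1:ℝ) δ, F r = 0 := by
    intro r hr
    have h1 : F 1 ≤ F r := hFmono (left_mem_Icc.2 (le_of_lt hδ)) hr hr.1
    have h2 : F r ≤ F δ := hFmono hr (right_mem_Icc.2 (le_of_lt hδ)) hr.2
    linarith [hF1 ▸ h1, hFδ ▸ h2]
  -- R vanishes on Ioo
  have hRzero : ∀ r ∈ Ioo (1:ℝ) δ, R r = 0 := by
    intro r hr
    have hd := hFd r (Ioo_subset_Icc_self hr)
    have hev : F =ᶠ[nhds r] (fun _ => (0:ℝ)) := by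
      filter_upwards [isOpen_Ioo.mem_nhds hr] with x hx
      exact hFzero x (Ioo_subset_Icc_self hx)
    have hd0 : HasDerivAt (fun _ : ℝ => (0:ℝ))
        (r * ((n:ℝ)^2/r^2 - lam₁) * (R r)^2 + r * (R' r)^2) r := hd.congr_of_eventuallyEq hev.symm
    have : r * ((n:ℝ)^2/r^2 - lam₁) * (R r)^2 + r * (R' r)^2 = 0 := by
      have := hd0.deriv
      simpa using this.symm
    have hr0 : (0:ℝ) < r := lt_trans one_pos hr.1
    have hqpos : 0 < (n:ℝ)^2 / r^2 - lam₁ := by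
      have : (n:ℝ)^2 / δ^2 < (n:ℝ)^2 / r^2 := by
        apply div_lt_div_of_pos_left hn0 (by positivity)
        nlinarith [hr.2, hr.1]
      linarith
    have hRsq : (R r)^2 = 0 := by
      nlinarith [mul_pos hr0 hqpos, mul_nonneg hr0.le (sq_nonneg (R' r)), sq_nonneg (R r)]
    exact pow_eq_zero_iff two_ne_zero |>.mp hRsq
  -- R vanishes on Icc by continuity
  have hcl : closure (Ioo (1:ℝ) δ) = Icc 1 δ := closure_Ioo (ne_of_lt hδ)
  have hRr₀ : R r₀ = 0 := by
    have hmem : r₀ ∈ closure (Ioo (1:ℝ) δ) := hcl ▸ hr₀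
    have hne : (nhdsWithin r₀ (Ioo (1:ℝ) δ)).NeBot :=
      mem_closure_iff_nhdsWithin_neBot.mp hmem
    have hc : ContinuousAt R r₀ := (hODE r₀ hr₀).1.continuousAt
    have ht1 : Filter.Tendsto R (nhdsWithin r₀ (Ioo 1 δ)) (nhds (R r₀)) :=
      hc.continuousWithinAt
    have ht2 : Filter.Tendsto R (nhdsWithin r₀ (Ioo 1 δ)) (nhds 0) := by
      apply Filter.Tendsto.congr' _ tendsto_const_nhds
      filter_upwards [self_mem_nhdsWithin] with x hx
      exact (hRzero x hx).symm
    exact tendsto_nhds_unique ht1 ht2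
  exact hR₀ hRr₀
end
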